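/- Let f₁, …, f_m : X → (-∞, +∞] be proper lower semicontinuous convex functions on a real Banach space X with ⋂ᵢ dom fᵢ ≠ ∅, and suppose there exists K > 0 such that for every x ∈ ⋂ᵢ dom fᵢ and ε > 0 the weak* closure of ∑ᵢ ∂_ε fᵢ(x) is contained in ∑ᵢ ∂_{Kε} fᵢ(x). Then for every x ∈ X, ∂(f₁+⋯+f_m)(x) = ⋂_{η > 0} [ ∂_η f₁(x) + ⋯ + ∂_η f_m(x) ]. -/

import Mathlib

open Pointwise Topology Set

noncomputable section

variable {X : Type*} [NormedAddCommGroup X] [NormedSpace ℝ X]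

/-- `f` is proper: never `-∞` and finite somewhere. -/
def EProper (f : X → EReal) : Prop := (∀ x, f x ≠ ⊥) ∧ ∃ x, f x ≠ ⊤

/-- effective domain of `f`. -/
def edom (f : X → EReal) : Set X := {x | f x < ⊤}

/-- convexity for extended-real-valued functions. -/
def EConvex (f : X → EReal) : Prop :=
  ∀ x y : X, ∀ t : ℝ, 0 ≤ t → t ≤ 1 →
    f (t • x + (1 - t) • y) ≤ (t : EReal) * f x + ((1 - t : ℝ) : EReal) * f y

/-- the ε-subdifferential of `f` at `x`, a subset of the weak* dual. -/
def epsSubdiff (f : X → EReal) (ε : ℝ) (x : X) : Set (WeakDual ℝ X) :=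
  {p | f x ≠ ⊤ ∧ f x ≠ ⊥ ∧ ∀ y : X, (p (y - x) : EReal) + f x ≤ f y + (ε : EReal)}

/-- the (exact) subdifferential of `f` at `x`. -/
def subdiff (f : X → EReal) (x : X) : Set (WeakDual ℝ X) := epsSubdiff f 0 x

/-- the Fenchel conjugate of `f`. -/
def fconj (f : X → EReal) (p : WeakDual ℝ X) : EReal := ⨆ x : X, (p x : EReal) - f x

/-- the infimal convolution of finitely many functions on the dual. -/
def infConv {m : ℕ} (g : Fin m → WeakDual ℝ X → EReal) (p : WeakDual ℝ X) : EReal :=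
  ⨅ (y : Fin m → WeakDual ℝ X) (_ : ∑ i, y i = p), ∑ i, g i (y i)

/-- exactness (attainment) of the infimal convolution at `p`. -/
def infConvExactAt {m : ℕ} (g : Fin m → WeakDual ℝ X → EReal) (p : WeakDual ℝ X) : Prop :=
  ∃ y : Fin m → WeakDual ℝ X, ∑ i, y i = p ∧ infConv g p = ∑ i, g i (y i)

/-- the epigraph of the Fenchel conjugate of `f`, in `X* × ℝ`. -/
def epiConj (f : X → EReal) : Set ((WeakDual ℝ X) × ℝ) :=
  {q | fconj f q.1 ≤ (q.2 : EReal)}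

/-!
The inclusion `⊇` is the sum rule for `ε`-subdifferentials, letting `ε → 0`.

For `⊆`, every proper lower semicontinuous convex `fᵢ` is the supremum of its continuous affine
minorants (Hahn–Banach applied to its epigraph). Let `p ∈ ∂(∑ fᵢ)(x)`. If `(p, -∑ fᵢ(x))` could be
separated in `X* × ℝ` from the set of pairs `(∑ qᵢ, ∑ (γᵢ - qᵢ x))` built from affine minorants
`qᵢ - γᵢ ≤ fᵢ`, the separating weak*-continuous functional would be evaluation at some `v ∈ X`,
and the supremum description of the `fᵢ` at a point `x - s v` would contradict the subgradient
inequality. So `p` is a weak* limit of sums `∑ qᵢ` whose total gap `∑ (γᵢ + fᵢ(x) - qᵢ x)` is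
below `ε`, that is `p ∈ cl (∑ ∂_ε fᵢ(x))`, and the hypothesis on `K` removes the closure at the
price of replacing `ε` by `K ε`.
-/

instance WeakDual.instLocallyConvexSpace : LocallyConvexSpace ℝ (WeakDual ℝ X) :=
  WeakBilin.locallyConvexSpace

namespace EReal

theorem le_of_forall_pos_le_add_coe {a b : EReal} (h : ∀ η : ℝ, 0 < η → a ≤ b + η) : a ≤ b := by
  refine le_of_forall_lt_iff_le.1 fun z hz => ?_
  induction b using EReal.rec with
  | bot => exact (h 1 one_pos).trans (by rw [bot_add]; exact bot_le)
  | coe b =>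
    have := h (z - b) (by simpa using hz)
    rwa [← coe_add, add_sub_cancel] at this
  | top => exact absurd hz not_top_lt

theorem coe_finsetSum {ι : Type*} (s : Finset ι) (r : ι → ℝ) :
    ((∑ i ∈ s, r i : ℝ) : EReal) = ∑ i ∈ s, (r i : EReal) :=
  map_sum (⟨⟨(↑), coe_zero⟩, coe_add⟩ : ℝ →+ EReal) r s

theorem exists_lt_lt_add_of_lt_add {a b c : EReal} (h : c < a + b) :
    ∃ a' < a, ∃ b' < b, c < a' + b' := by
  by_contra! H
  exact h.not_ge (add_le_of_forall_lt H)

theorem exists_lt_lt_finsetSum_of_lt_finsetSum {ι : Type*} {s : Finset ι} {a : ι → EReal}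
    {c : EReal} (h : c < ∑ i ∈ s, a i) :
    ∃ r : ι → EReal, (∀ i ∈ s, r i < a i) ∧ c < ∑ i ∈ s, r i := by
  classical
  induction s using Finset.induction_on generalizing c with
  | empty => exact ⟨a, by simp, h⟩
  | insert j s hj ih =>
    rw [Finset.sum_insert hj] at h
    obtain ⟨b, hb, t, ht, hc⟩ := exists_lt_lt_add_of_lt_add h
    obtain ⟨r, hr, htr⟩ := ih ht
    refine ⟨Function.update r j b, fun i hi => ?_, ?_⟩
    · rcases eq_or_ne i j with rfl | hij
      · simpa using hb
      · rw [Function.update_of_ne hij]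
        exact hr i ((Finset.mem_insert.1 hi).resolve_left hij)
    · rw [Finset.sum_insert hj, Function.update_self, Finset.sum_update_of_notMem hj]
      exact hc.trans_le (add_le_add_right htr.le b)

end EReal

theorem geometric_hahn_banach_point_closure_upward {V : Type*} [AddCommGroup V] [Module ℝ V]
    [TopologicalSpace V] [IsTopologicalAddGroup V] [ContinuousSMul ℝ V] [LocallyConvexSpace ℝ V]
    {E : Set (V × ℝ)} (hconv : Convex ℝ E) (hne : E.Nonempty)
    (hup : ∀ z ∈ E, ∀ t, z.2 ≤ t → (z.1, t) ∈ E) {z₀ : V × ℝ} (h : z₀ ∉ closure E) :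
    ∃ (ψ : V →L[ℝ] ℝ) (c u : ℝ), 0 ≤ c ∧ ψ z₀.1 + c * z₀.2 < u ∧
      ∀ z ∈ E, u < ψ z.1 + c * z.2 := by
  obtain ⟨Φ, u, hz₀, hE⟩ := geometric_hahn_banach_point_closed hconv.closure isClosed_closure h
  have hΦ : ∀ z : V × ℝ, Φ z = Φ (z.1, 0) + Φ (0, 1) * z.2 := fun z => by
    conv_lhs => rw [show z = (z.1, 0) + z.2 • ((0 : V), (1 : ℝ)) by ext <;> simp]
    rw [map_add, map_smul, smul_eq_mul, mul_comm]
  refine ⟨Φ.comp (.inl ℝ V ℝ), Φ (0, 1), u, ?_, by simpa [← hΦ] using hz₀,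
    fun z hz => by simpa [← hΦ] using hE z (subset_closure hz)⟩
  by_contra! hc
  obtain ⟨z, hz⟩ := hne
  -- if `Φ (0, 1) < 0`, raising `z` inside `E` drives `Φ` down to `u`
  have hzu := hE z (subset_closure hz)
  have hlt := hE _ (subset_closure (hup z hz (z.2 - (Φ z - u) / Φ (0, 1)) ?_))
  · rw [hΦ, mul_sub, mul_div_cancel₀ _ hc.ne] at hlt
    linarith [hΦ z]
  · linarith [div_nonpos_of_nonneg_of_nonpos (sub_nonneg.2 hzu.le) hc.le]

def IsAffineMinorant (f : X → EReal) (q : WeakDual ℝ X) (γ : ℝ) : Prop :=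
  ∀ y, ((q y - γ : ℝ) : EReal) ≤ f y

def realEpigraph {α : Type*} (f : α → EReal) : Set (α × ℝ) := {z | f z.1 ≤ z.2}

theorem isAffineMinorant_iff_forall_mem_realEpigraph {f : X → EReal} {q : WeakDual ℝ X} {γ : ℝ} :
    IsAffineMinorant f q γ ↔ ∀ z ∈ realEpigraph f, q z.1 - γ ≤ z.2 :=
  ⟨fun h z hz => EReal.coe_le_coe_iff.1 ((h z.1).trans hz),
    fun h y => EReal.le_of_forall_lt_iff_le.1 fun s hs => EReal.coe_le_coe_iff.2 (h (y, s) hs.le)⟩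

theorem IsAffineMinorant.convexCombination {f : X → EReal} {q q' : WeakDual ℝ X} {γ γ' a b : ℝ}
    (h : IsAffineMinorant f q γ) (h' : IsAffineMinorant f q' γ') (ha : 0 ≤ a) (hb : 0 ≤ b)
    (hab : a + b = 1) : IsAffineMinorant f (a • q + b • q') (a * γ + b * γ') := by
  rw [isAffineMinorant_iff_forall_mem_realEpigraph] at *
  intro z hz
  have hq : (a • q + b • q') z.1 = a * q z.1 + b * q' z.1 := rfl
  rw [hq]
  linear_combination mul_le_mul_of_nonneg_left (h z hz) ha +
    mul_le_mul_of_nonneg_left (h' z hz) hb + z.2 * hab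

theorem IsAffineMinorant.mem_epsSubdiff {f : X → EReal} {q : WeakDual ℝ X} {γ ε a : ℝ} {x : X}
    (h : IsAffineMinorant f q γ) (hx : f x = a) (hgap : γ + a - q x ≤ ε) :
    q ∈ epsSubdiff f ε x := by
  refine ⟨by simp [hx], by simp [hx], fun y => ?_⟩
  calc ((q (y - x) : ℝ) : EReal) + f x = ((q y - γ + (γ + a - q x) : ℝ) : EReal) := by
        rw [hx, map_sub, ← EReal.coe_add]; ring_nf
    _ ≤ ((q y - γ : ℝ) : EReal) + ε := by rw [EReal.coe_add]; gcongr
    _ ≤ f y + ε := by gcongr; exact h y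

theorem isClosed_realEpigraph {α : Type*} [TopologicalSpace α] {f : α → EReal}
    (hl : LowerSemicontinuous f) : IsClosed (realEpigraph f) :=
  hl.isClosed_epigraph.preimage (continuous_id.prodMap continuous_coe_real_ereal)

theorem convex_realEpigraph {f : X → EReal} (hc : EConvex f) : Convex ℝ (realEpigraph f) := by
  rintro ⟨y, s⟩ hy ⟨y', s'⟩ hy' a b ha hb hab
  obtain rfl : b = 1 - a := by linarith
  calc f (a • y + (1 - a) • y') ≤ (a : EReal) * f y + ((1 - a : ℝ) : EReal) * f y' :=
        hc y y' a ha (by linarith)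
    _ ≤ (a : EReal) * s + ((1 - a : ℝ) : EReal) * s' := by
        have hb' : 0 ≤ 1 - a := by linarith
        exact add_le_add (mul_le_mul_of_nonneg_left hy (by exact_mod_cast ha))
          (mul_le_mul_of_nonneg_left hy' (by exact_mod_cast hb'))
    _ = ((a * s + (1 - a) * s' : ℝ) : EReal) := by norm_cast

theorem isAffineMinorant_of_forall_lt {f : X → EReal} {ψ : WeakDual ℝ X} {c u : ℝ} (hc : 0 < c)
    (h : ∀ z ∈ realEpigraph f, u < ψ z.1 + c * z.2) :
    ∃ q γ, IsAffineMinorant f q γ ∧ ∀ y, q y - γ = (u - ψ y) / c := by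
  have hval : ∀ y, (-c⁻¹ • ψ) y - -c⁻¹ * u = (u - ψ y) / c := fun y => by
    change -c⁻¹ * ψ y - -c⁻¹ * u = _
    field_simp
    ring
  refine ⟨-c⁻¹ • ψ, -c⁻¹ * u, ?_, hval⟩
  rw [isAffineMinorant_iff_forall_mem_realEpigraph]
  intro z hz
  rw [hval, div_le_iff₀ hc]
  linarith [h z hz]

theorem EProper.exists_eq_coe {α : Type*} {f : α → EReal} (hp : EProper f) :
    ∃ x, ∃ a : ℝ, f x = a := by
  obtain ⟨x, hx⟩ := hp.2
  exact ⟨x, (f x).toReal, (EReal.coe_toReal hx (hp.1 x)).symm⟩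

theorem exists_separation_realEpigraph {f : X → EReal} (hp : EProper f)
    (hl : LowerSemicontinuous f) (hc : EConvex f) {z : X} {r : ℝ} (h : (r : EReal) < f z) :
    ∃ (ψ : WeakDual ℝ X) (c u : ℝ), 0 ≤ c ∧ ψ z + c * r < u ∧
      ∀ w ∈ realEpigraph f, u < ψ w.1 + c * w.2 := by
  obtain ⟨x, a, hx⟩ := hp.exists_eq_coe
  obtain ⟨ψ, c, u, hc, hz, hE⟩ := geometric_hahn_banach_point_closure_upward
    (convex_realEpigraph hc) ⟨(x, a), le_of_eq hx⟩
    (fun w hw t ht => le_trans hw (EReal.coe_le_coe_iff.2 ht)) (z₀ := (z, r))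
    (by rw [(isClosed_realEpigraph hl).closure_eq]; exact h.not_ge)
  exact ⟨StrongDual.toWeakDual ψ, c, u, hc, hz, hE⟩

theorem exists_isAffineMinorant {f : X → EReal} (hp : EProper f) (hl : LowerSemicontinuous f)
    (hc : EConvex f) : ∃ q γ, IsAffineMinorant f q γ := by
  obtain ⟨x, a, hx⟩ := hp.exists_eq_coe
  obtain ⟨ψ, c, u, -, hlt, hE⟩ := exists_separation_realEpigraph hp hl hc (z := x) (r := a - 1)
    (by rw [hx]; exact_mod_cast sub_one_lt a)
  have hc : 0 < c := by linarith [hE (x, a) (le_of_eq hx)]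
  obtain ⟨q, γ, hq, -⟩ := isAffineMinorant_of_forall_lt hc hE
  exact ⟨q, γ, hq⟩

theorem exists_isAffineMinorant_lt {f : X → EReal} (hp : EProper f)
    (hl : LowerSemicontinuous f) (hc : EConvex f) {z : X} {r : EReal} (h : r < f z) :
    ∃ q γ, IsAffineMinorant f q γ ∧ r < ((q z - γ : ℝ) : EReal) := by
  obtain ⟨t, hrt, htz⟩ := EReal.lt_iff_exists_real_btwn.1 h
  obtain ⟨ψ, c, u, hc0, hlt, hE⟩ := exists_separation_realEpigraph hp hl hc htz
  obtain ⟨q₀, γ₀, hq₀⟩ := exists_isAffineMinorant hp hl hc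
  have hd : 0 < u - ψ z - c * t := by linarith
  set lam := (|t - (q₀ z - γ₀)| + 1) / (u - ψ z - c * t)
  have hlam : 0 < lam := by positivity
  have hlamd : lam * (u - ψ z - c * t) = |t - (q₀ z - γ₀)| + 1 := div_mul_cancel₀ _ hd.ne'
  -- adding a large multiple of the separating functional to `(q₀, γ₀)` tilts it above `(z, t)`
  obtain ⟨q, γ, hq, hval⟩ := isAffineMinorant_of_forall_lt (ψ := lam • ψ - q₀)
    (c := lam * c + 1) (u := lam * u - γ₀) (by positivity) fun w hw => by
      have h₁ := mul_lt_mul_of_pos_left (hE w hw) hlam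
      have h₂ := (isAffineMinorant_iff_forall_mem_realEpigraph.1 hq₀) w hw
      change _ < lam * ψ w.1 - q₀ w.1 + _
      linarith
  refine ⟨q, γ, hq, hrt.trans (EReal.coe_lt_coe_iff.2 ?_)⟩
  rw [hval, lt_div_iff₀ (by positivity)]
  change _ < lam * u - γ₀ - (lam * ψ z - q₀ z)
  linarith [le_abs_self (t - (q₀ z - γ₀))]

theorem sum_le_of_forall_isAffineMinorant {ι : Type*} [Fintype ι] {f : ι → X → EReal}
    (hp : ∀ i, EProper (f i)) (hl : ∀ i, LowerSemicontinuous (f i)) (hc : ∀ i, EConvex (f i))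
    {w : X} {β : ℝ}
    (h : ∀ (q : ι → WeakDual ℝ X) (γ : ι → ℝ), (∀ i, IsAffineMinorant (f i) (q i) (γ i)) →
      ∑ i, (q i w - γ i) ≤ β) :
    ∑ i, f i w ≤ β := by
  by_contra! hβ
  obtain ⟨r, hr, hβr⟩ := EReal.exists_lt_lt_finsetSum_of_lt_finsetSum hβ
  choose q γ hq hrq using fun i => exists_isAffineMinorant_lt (hp i) (hl i) (hc i)
    (hr i (Finset.mem_univ i))
  refine hβr.not_ge (le_trans (Finset.sum_le_sum fun i _ => (hrq i).le) ?_)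
  rw [← EReal.coe_finsetSum]
  exact EReal.coe_le_coe_iff.2 (h q γ hq)

section SumRule

variable {ι : Type*} [Fintype ι]

/-- After the shift `(q, t) ↦ (q, t + q x)` this is the epigraph of the infimal convolution of
the conjugates `(fᵢ)*`; its closure is the epigraph of `(∑ fᵢ)*`. -/
def affineMinorantSumSet (f : ι → X → EReal) (x : X) : Set (WeakDual ℝ X × ℝ) :=
  {z | ∃ (q : ι → WeakDual ℝ X) (γ : ι → ℝ), (∀ i, IsAffineMinorant (f i) (q i) (γ i)) ∧
    ∑ i, q i = z.1 ∧ ∑ i, (γ i - q i x) ≤ z.2}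

theorem WeakDual.sum_apply (q : ι → WeakDual ℝ X) (y : X) : (∑ i, q i) y = ∑ i, q i y :=
  _root_.sum_apply (F := X →L[ℝ] ℝ) _ _ _

theorem convex_affineMinorantSumSet (f : ι → X → EReal) (x : X) :
    Convex ℝ (affineMinorantSumSet f x) := by
  rintro z ⟨q, γ, hq, hz₁, hz₂⟩ z' ⟨q', γ', hq', hz₁', hz₂'⟩ a b ha hb hab
  refine ⟨fun i => a • q i + b • q' i, fun i => a * γ i + b * γ' i,
    fun i => (hq i).convexCombination (hq' i) ha hb hab, ?_, ?_⟩
  · simp only [Finset.sum_add_distrib, ← Finset.smul_sum, hz₁, hz₁', Prod.fst_add, Prod.smul_fst]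
  · have hsplit : ∑ i, (a * γ i + b * γ' i - (a • q i + b • q' i) x) =
        a * ∑ i, (γ i - q i x) + b * ∑ i, (γ' i - q' i x) := by
      simp only [Finset.mul_sum, ← Finset.sum_add_distrib]
      exact Finset.sum_congr rfl fun i _ => by
        change _ - (a * q i x + b * q' i x) = _
        ring
    rw [hsplit, Prod.snd_add, Prod.smul_snd, Prod.smul_snd, smul_eq_mul, smul_eq_mul]
    gcongr

theorem mem_closure_affineMinorantSumSet {f : ι → X → EReal} (hp : ∀ i, EProper (f i))
    (hl : ∀ i, LowerSemicontinuous (f i)) (hc : ∀ i, EConvex (f i)) {x : X} {a : ι → ℝ}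
    (ha : ∀ i, f i x = a i) {p : WeakDual ℝ X} (hpx : p ∈ subdiff (fun y => ∑ i, f i y) x) :
    (p, -∑ i, a i) ∈ closure (affineMinorantSumSet f x) := by
  by_contra hout
  choose q₀ γ₀ h₀ using fun i => exists_isAffineMinorant (hp i) (hl i) (hc i)
  obtain ⟨ψ, c, u, hc0, hlt, hE⟩ := geometric_hahn_banach_point_closure_upward
    (convex_affineMinorantSumSet f x)
    ⟨(∑ i, q₀ i, ∑ i, (γ₀ i - q₀ i x)), q₀, γ₀, h₀, rfl, le_rfl⟩
    (fun z ⟨q, γ, hq, h₁, h₂⟩ t ht => ⟨q, γ, hq, h₁, h₂.trans ht⟩) hout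
  obtain ⟨v, hv⟩ := LinearMap.dualEmbedding_surjective (topDualPairing ℝ X) ψ
  replace hv : ∀ q : WeakDual ℝ X, ψ q = q v := fun q => by rw [← hv]; rfl
  set s := (1 + c)⁻¹
  have hs : 0 < s := by positivity
  have hsc : 0 ≤ 1 - s * c := by
    rw [sub_nonneg, ← div_eq_inv_mul, div_le_one (by positivity)]
    linarith
  -- `s * c ≤ 1` turns the separation into a bound at `x - s • v` uniform over all minorants
  have hF : ∑ i, f i (x - s • v) ≤ (((1 - s * c) * ∑ i, a i - s * u : ℝ) : EReal) := by
    refine sum_le_of_forall_isAffineMinorant hp hl hc fun q γ hq => ?_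
    have hsep := hE (∑ i, q i, ∑ i, (γ i - q i x)) ⟨q, γ, hq, rfl, le_rfl⟩
    rw [hv, WeakDual.sum_apply] at hsep
    have hqx : ∑ i, (q i x - γ i) ≤ ∑ i, a i := Finset.sum_le_sum fun i _ =>
      EReal.coe_le_coe_iff.1 ((hq i x).trans_eq (ha i))
    have hsplit : ∑ i, (q i (x - s • v) - γ i) = ∑ i, (q i x - γ i) - s * ∑ i, q i v := by
      simp only [map_sub, map_smul, smul_eq_mul, Finset.mul_sum, ← Finset.sum_sub_distrib]
      exact Finset.sum_congr rfl fun i _ => by ring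
    have hγ : ∑ i, (γ i - q i x) = -∑ i, (q i x - γ i) := by
      simp only [← Finset.sum_neg_distrib, neg_sub]
    rw [hγ] at hsep
    rw [hsplit]
    nlinarith [mul_lt_mul_of_pos_left hsep hs, mul_le_mul_of_nonneg_left hqx hsc]
  have hsub := hpx.2.2 (x - s • v)
  simp only [ha, ← EReal.coe_finsetSum, EReal.coe_zero, add_zero] at hsub
  have hreal : p (x - s • v - x) + ∑ i, a i ≤ (1 - s * c) * ∑ i, a i - s * u :=
    EReal.coe_le_coe_iff.1 (by rw [EReal.coe_add]; exact hsub.trans hF)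
  rw [show x - s • v - x = -(s • v) by abel, map_neg, map_smul, smul_eq_mul] at hreal
  rw [hv] at hlt
  nlinarith [mul_lt_mul_of_pos_left hlt hs]

theorem mem_closure_sum_epsSubdiff {f : ι → X → EReal} (hp : ∀ i, EProper (f i))
    (hl : ∀ i, LowerSemicontinuous (f i)) (hc : ∀ i, EConvex (f i)) {x : X} {a : ι → ℝ}
    (ha : ∀ i, f i x = a i) {p : WeakDual ℝ X} (hpx : p ∈ subdiff (fun y => ∑ i, f i y) x)
    {ε : ℝ} (hε : 0 < ε) : p ∈ closure (∑ i, epsSubdiff (f i) ε x) := by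
  refine mem_closure_iff_nhds.2 fun W hW => ?_
  obtain ⟨⟨_, t⟩, ⟨hqW, ht⟩, q, γ, hq, rfl, hγq⟩ :=
    mem_closure_iff_nhds.1 (mem_closure_affineMinorantSumSet hp hl hc ha hpx) _
      (prod_mem_nhds hW (Iio_mem_nhds (lt_add_of_pos_right (-∑ i, a i) hε)))
  have hgap : ∀ i, 0 ≤ γ i + a i - q i x := fun i => by
    linarith [EReal.coe_le_coe_iff.1 ((hq i x).trans_eq (ha i))]
  have hgap_sum : ∑ i, (γ i + a i - q i x) < ε := by
    have : ∑ i, (γ i + a i - q i x) = ∑ i, (γ i - q i x) + ∑ i, a i := by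
      rw [← Finset.sum_add_distrib]
      exact Finset.sum_congr rfl fun i _ => by ring
    rw [this]
    linarith [mem_Iio.1 ht]
  refine ⟨∑ i, q i, hqW, (Set.mem_fintype_sum _ _).2 ⟨q, fun i => ?_, rfl⟩⟩
  exact (hq i).mem_epsSubdiff (ha i)
    ((Finset.single_le_sum (fun j _ => hgap j) (Finset.mem_univ i)).trans hgap_sum.le)

theorem exists_coe_eq_of_mem_subdiff_sum {f : ι → X → EReal} {x : X} (hbot : ∀ i, f i x ≠ ⊥)
    {p : WeakDual ℝ X} (hpx : p ∈ subdiff (fun y => ∑ i, f i y) x) :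
    ∃ a : ι → ℝ, ∀ i, f i x = a i := by
  classical
  refine ⟨fun i => (f i x).toReal,
    fun i => (EReal.coe_toReal (fun htop => hpx.1 ?_) (hbot i)).symm⟩
  have hrest : ∑ j ∈ Finset.univ.erase i, f j x ≠ ⊥ :=
    Finset.sum_induction _ (· ≠ ⊥) (fun _ _ h₁ h₂ => EReal.add_ne_bot_iff.2 ⟨h₁, h₂⟩)
      EReal.zero_ne_bot fun j _ => hbot j
  change ∑ j, f j x = ⊤
  rw [← Finset.add_sum_erase _ _ (Finset.mem_univ i), htop, EReal.top_add_of_ne_bot hrest]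

theorem sum_mem_epsSubdiff_sum {f : ι → X → EReal} {ε : ι → ℝ} {x : X}
    {g : ι → WeakDual ℝ X} (hg : ∀ i, g i ∈ epsSubdiff (f i) (ε i) x) :
    ∑ i, g i ∈ epsSubdiff (fun y => ∑ i, f i y) (∑ i, ε i) x := by
  have ha : ∀ i, f i x = (f i x).toReal := fun i => (EReal.coe_toReal (hg i).1 (hg i).2.1).symm
  have hsum : ∑ i, f i x = ((∑ i, (f i x).toReal : ℝ) : EReal) := by
    rw [EReal.coe_finsetSum]
    exact Finset.sum_congr rfl fun i _ => ha i
  refine ⟨by simp [hsum], by simp [hsum], fun y => ?_⟩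
  calc (((∑ i, g i) (y - x) : ℝ) : EReal) + ∑ i, f i x
      = ∑ i, (((g i (y - x)) : ℝ) + f i x) := by
        rw [WeakDual.sum_apply, EReal.coe_finsetSum, Finset.sum_add_distrib]
    _ ≤ ∑ i, (f i y + ε i) := Finset.sum_le_sum fun i _ => (hg i).2.2 y
    _ = ∑ i, f i y + ((∑ i, ε i : ℝ) : EReal) := by
        rw [Finset.sum_add_distrib, EReal.coe_finsetSum]

end SumRule

theorem epsSubdiff_mono {f : X → EReal} {ε ε' : ℝ} (h : ε ≤ ε') (x : X) :
    epsSubdiff f ε x ⊆ epsSubdiff f ε' x :=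
  fun _ ⟨htop, hbot, hp⟩ => ⟨htop, hbot, fun y => (hp y).trans (by gcongr)⟩

theorem mem_subdiff_of_forall_mem_epsSubdiff {f : X → EReal} {x : X} {p : WeakDual ℝ X}
    (h : ∀ η > 0, p ∈ epsSubdiff f η x) : p ∈ subdiff f x := by
  obtain ⟨htop, hbot, -⟩ := h 1 one_pos
  refine ⟨htop, hbot, fun y => ?_⟩
  rw [EReal.coe_zero, add_zero]
  exact EReal.le_of_forall_pos_le_add_coe fun η hη => (h η hη).2.2 y

theorem stmt14_general {X : Type*} [NormedAddCommGroup X] [NormedSpace ℝ X]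
    {m : ℕ} (f : Fin m → X → EReal)
    (hp : ∀ i, EProper (f i)) (hl : ∀ i, LowerSemicontinuous (f i)) (hc : ∀ i, EConvex (f i))
    (hK : ∃ K > (0 : ℝ), ∀ x ∈ ⋂ i, edom (f i), ∀ ε > (0 : ℝ),
      closure (∑ i, epsSubdiff (f i) ε x) ⊆ ∑ i, epsSubdiff (f i) (K * ε) x) :
    ∀ x : X, subdiff (fun y => ∑ i, f i y) x =
      ⋂ η ∈ Set.Ioi (0 : ℝ), ∑ i, epsSubdiff (f i) η x := by
  obtain ⟨K, hK0, hKP⟩ := hK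
  intro x
  ext p
  simp only [mem_iInter, mem_Ioi]
  constructor
  · intro hpx η hη
    obtain ⟨a, ha⟩ := exists_coe_eq_of_mem_subdiff_sum (fun i => (hp i).1 x) hpx
    have hx : x ∈ ⋂ i, edom (f i) := mem_iInter.2 fun i => by simp [edom, ha i]
    have hε : 0 < η / K := div_pos hη hK0
    simpa only [mul_div_cancel₀ _ hK0.ne'] using
      hKP x hx _ hε (mem_closure_sum_epsSubdiff hp hl hc ha hpx hε)
  · intro h
    refine mem_subdiff_of_forall_mem_epsSubdiff fun η hη => ?_
    obtain ⟨g, hg, rfl⟩ := (mem_fintype_sum _ _).1 (h (η / (m + 1)) (by positivity))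
    refine epsSubdiff_mono ?_ x (sum_mem_epsSubdiff_sum hg)
    rw [Finset.sum_const, Finset.card_univ, Fintype.card_fin, nsmul_eq_mul, mul_div_assoc',
      div_le_iff₀ (by positivity)]
    nlinarith

theorem stmt14 {X : Type*} [NormedAddCommGroup X] [NormedSpace ℝ X] [CompleteSpace X]
    {m : ℕ} (hm : 1 ≤ m) (f : Fin m → X → EReal)
    (hp : ∀ i, EProper (f i)) (hl : ∀ i, LowerSemicontinuous (f i)) (hc : ∀ i, EConvex (f i))
    (hdom : (⋂ i, edom (f i)).Nonempty)
    (hK : ∃ K > (0 : ℝ), ∀ x ∈ ⋂ i, edom (f i), ∀ ε > (0 : ℝ),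
      closure (∑ i, epsSubdiff (f i) ε x) ⊆ ∑ i, epsSubdiff (f i) (K * ε) x) :
    ∀ x : X, subdiff (fun y => ∑ i, f i y) x =
      ⋂ η ∈ Set.Ioi (0 : ℝ), ∑ i, epsSubdiff (f i) η x :=
  stmt14_general f hp hl hc hK
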